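/- arXiv:1812.11510 — 2 statements merged into one kernel-verified Lean document; each statement's English description precedes it below -/
import Mathlib

section
/- Let F be a filter and P a prime filter containing F in a residuated lattice. Then P is an F-minimal prime filter if and only if P = D_F(P), where D_F(P) = {a ∈ A | (F : a) ⊄ P}; and this holds if and only if for each x ∈ A, P contains exactly one of x or (F : x). -/
universe u

class ResiduatedLattice (A : Type u) extends Lattice A, BoundedOrder A where
  mul : A → A → A
  himp : A → A → A
  mul_comm : ∀ x y : A, mul x y = mul y x
  mul_assoc : ∀ x y z : A, mul (mul x y) z = mul x (mul y z)
  mul_top : ∀ x : A, mul x ⊤ = x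
  adjoint : ∀ x y z : A, mul x y ≤ z ↔ x ≤ himp y z

namespace RL

variable {A : Type u} [ResiduatedLattice A]

/-- A filter: a nonempty subset closed under the monoid operation `⊙` and closed
under joins with arbitrary elements. -/
def IsFilter (F : Set A) : Prop :=
  F.Nonempty ∧ (∀ x ∈ F, ∀ y ∈ F, ResiduatedLattice.mul x y ∈ F) ∧
    (∀ x ∈ F, ∀ y : A, x ⊔ y ∈ F)

/-- A prime filter: a proper filter such that `x ⊔ y ∈ P` implies `x ∈ P` or `y ∈ P`. -/
def IsPrime (P : Set A) : Prop :=
  IsFilter P ∧ P ≠ Set.univ ∧ ∀ x y : A, x ⊔ y ∈ P → x ∈ P ∨ y ∈ P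

/-- The filter generated by a subset `X`. -/
def Fgen (X : Set A) : Set A := ⋂₀ {G : Set A | IsFilter G ∧ X ⊆ G}

/-- An `X`-minimal prime filter: a minimal element of the set of prime filters containing `X`. -/
def MinPrimeOver (X : Set A) (P : Set A) : Prop :=
  IsPrime P ∧ X ⊆ P ∧ ∀ Q : Set A, IsPrime Q → X ⊆ Q → Q ⊆ P → Q = P

/-- A minimal prime filter. -/
def MinPrime (P : Set A) : Prop :=
  IsPrime P ∧ ∀ Q : Set A, IsPrime Q → Q ⊆ P → Q = P

/-- The coannihilator of `X` belonging to `F`. -/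
def coann (F : Set A) (X : Set A) : Set A := {a : A | ∀ x ∈ X, x ⊔ a ∈ F}

/-- `X^⊥ = {a | x ⊔ a = ⊤ for all x ∈ X}`. -/
def perp (X : Set A) : Set A := {a : A | ∀ x ∈ X, x ⊔ a = ⊤}

/-- `D_F(P) = {a | (F : a) ⊄ P}`. -/
def DF (F P : Set A) : Set A := {a : A | ¬ coann F {a} ⊆ P}

/-- A `∨`-closed subset: nonempty and closed under joins. -/
def VClosed (C : Set A) : Prop := C.Nonempty ∧ ∀ x ∈ C, ∀ y ∈ C, x ⊔ y ∈ C

end RL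

/-
If every `x ∈ P` has some `y ∉ P` with `x ⊔ y ∈ F`, then a prime `Q` with `F ⊆ Q ⊆ P` contains
`x ⊔ y` but not `y`, hence contains `x`; so `P` is `F`-minimal. Conversely, if `x ∈ P` and
`(F : x) ⊆ P`, the `∨`-closed set `x ⊔ (A \ P)` misses `F`; a prime filter `Q ⊇ F` missing it lies
inside `P` (as `q ∉ P` would give `x ⊔ q ∈ Q`) and cannot be `P`, against minimality.
Such a `Q` is a maximal filter missing the `∨`-closed set `C`. It is prime because `Q : b` is again
a filter: if `a ⊔ b ∈ Q` with `a, b ∉ Q`, maximality yields `c₁ ∈ C` with `b ⊔ c₁ ∈ Q`, then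
`c₂ ∈ C` with `c₁ ⊔ c₂ ∈ Q`, and `c₁ ⊔ c₂ ∈ C`.
-/

namespace RL

variable {A : Type u} [ResiduatedLattice A]

local infixl:70 " ⊙ " => ResiduatedLattice.mul

theorem sup_mul_le_iff {x y z w : A} : (x ⊔ y) ⊙ z ≤ w ↔ x ⊙ z ≤ w ∧ y ⊙ z ≤ w := by
  simp only [ResiduatedLattice.adjoint, sup_le_iff]

theorem mul_le_left (x y : A) : x ⊙ y ≤ x := by
  have himp_self : ⊤ ≤ ResiduatedLattice.himp x x := by
    rw [← ResiduatedLattice.adjoint, ResiduatedLattice.mul_comm, ResiduatedLattice.mul_top]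
  rw [ResiduatedLattice.mul_comm, ResiduatedLattice.adjoint]
  exact le_top.trans himp_self

theorem sup_mul_sup_le (x y z : A) : (x ⊔ y) ⊙ (x ⊔ z) ≤ x ⊔ y ⊙ z := by
  refine sup_mul_le_iff.2 ⟨(mul_le_left x _).trans le_sup_left, ?_⟩
  rw [ResiduatedLattice.mul_comm, sup_mul_le_iff, ResiduatedLattice.mul_comm z]
  exact ⟨(mul_le_left x y).trans le_sup_left, le_sup_right⟩

theorem IsFilter.mem_of_le {F : Set A} (hF : IsFilter F) {x y : A} (hx : x ∈ F) (h : x ≤ y) :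
    y ∈ F := by
  simpa [sup_eq_right.2 h] using hF.2.2 x hx y

theorem mem_coann_singleton {F : Set A} {x a : A} : a ∈ coann F {x} ↔ x ⊔ a ∈ F := by
  simp [coann]

theorem IsFilter.subset_coann {F : Set A} (hF : IsFilter F) (x : A) : F ⊆ coann F {x} :=
  fun a ha => mem_coann_singleton.2 (sup_comm a x ▸ hF.2.2 a ha x)

theorem IsFilter.coann {F : Set A} (hF : IsFilter F) (x : A) : IsFilter (coann F {x}) := by
  refine ⟨hF.1.mono (hF.subset_coann x), fun a ha b hb => ?_, fun a ha b => ?_⟩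
  · rw [mem_coann_singleton] at ha hb ⊢
    exact hF.mem_of_le (hF.2.1 _ ha _ hb) (sup_mul_sup_le x a b)
  · rw [mem_coann_singleton] at ha ⊢
    exact sup_assoc x a b ▸ hF.2.2 _ ha b

theorem isFilter_sUnion_of_isChain {c : Set (Set A)} (hc : ∀ G ∈ c, IsFilter G) (hchain : IsChain (· ⊆ ·) c)
    (hne : c.Nonempty) : IsFilter (⋃₀ c) := by
  obtain ⟨G, hG⟩ := hne
  refine ⟨(hc G hG).1.mono (Set.subset_sUnion_of_mem hG), ?_, ?_⟩
  · rintro x ⟨G₁, hG₁, hx⟩ y ⟨G₂, hG₂, hy⟩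
    rcases hchain.total hG₁ hG₂ with h | h
    · exact ⟨G₂, hG₂, (hc G₂ hG₂).2.1 x (h hx) y hy⟩
    · exact ⟨G₁, hG₁, (hc G₁ hG₁).2.1 x hx y (h hy)⟩
  · rintro x ⟨G₁, hG₁, hx⟩ y
    exact ⟨G₁, hG₁, (hc G₁ hG₁).2.2 x hx y⟩

theorem exists_isPrime_of_disjoint {F C : Set A} (hF : IsFilter F) (hC : VClosed C)
    (hFC : Disjoint F C) : ∃ Q, IsPrime Q ∧ F ⊆ Q ∧ Disjoint Q C := by
  let S : Set (Set A) := {G | IsFilter G ∧ F ⊆ G ∧ Disjoint G C}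
  have chain_bound : ∀ c ⊆ S, IsChain (· ⊆ ·) c → c.Nonempty → ∃ ub ∈ S, ∀ s ∈ c, s ⊆ ub :=
    fun c hcS hchain hne => ⟨⋃₀ c,
      ⟨isFilter_sUnion_of_isChain (fun G hG => (hcS hG).1) hchain hne,
        hne.elim fun G hG => (hcS hG).2.1.trans (Set.subset_sUnion_of_mem hG),
        Set.disjoint_sUnion_left.2 fun G hG => (hcS hG).2.2⟩,
      fun _ => Set.subset_sUnion_of_mem⟩
  obtain ⟨Q, hFQ, hQ⟩ := zorn_subset_nonempty S chain_bound F ⟨hF, subset_rfl, hFC⟩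
  obtain ⟨hQF, -, hQC⟩ := hQ.prop
  have meets : ∀ x y, x ⊔ y ∈ Q → y ∉ Q → ∃ c ∈ C, x ⊔ c ∈ Q := by
    intro x y hxy hy
    by_contra! h
    have hdisj : Disjoint (coann Q {x}) C :=
      Set.disjoint_left.2 fun c hc hcC => h c hcC (mem_coann_singleton.1 hc)
    have hQx := hQ.eq_of_subset ⟨hQF.coann x, hFQ.trans (hQF.subset_coann x), hdisj⟩
      (hQF.subset_coann x)
    exact hy (hQx ▸ mem_coann_singleton.2 hxy)
  refine ⟨Q, ⟨hQF, fun h => ?_, fun a b hab => ?_⟩, hFQ, hQC⟩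
  · obtain ⟨c, hc⟩ := hC.1
    exact Set.disjoint_left.1 hQC (h ▸ Set.mem_univ c) hc
  · by_contra! hab'
    obtain ⟨c₁, hc₁, hbc₁⟩ := meets b a (sup_comm a b ▸ hab) hab'.1
    obtain ⟨c₂, hc₂, hc₁₂⟩ := meets c₁ b (sup_comm b c₁ ▸ hbc₁) hab'.2
    exact Set.disjoint_left.1 hQC hc₁₂ (hC.2 c₁ hc₁ c₂ hc₂)

theorem IsPrime.vClosed_sup_compl {P : Set A} (hP : IsPrime P) (x : A) :
    VClosed ((x ⊔ ·) '' Pᶜ) := by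
  obtain ⟨y, hy⟩ := (Set.ne_univ_iff_exists_notMem P).1 hP.2.1
  refine ⟨⟨x ⊔ y, y, hy, rfl⟩, ?_⟩
  rintro _ ⟨y, hy, rfl⟩ _ ⟨z, hz, rfl⟩
  exact ⟨y ⊔ z, fun hyz => (hP.2.2 y z hyz).elim hy hz, sup_sup_distrib_left x y z⟩

theorem DF_subset {F P : Set A} (hP : IsPrime P) (hFP : F ⊆ P) : DF F P ⊆ P := by
  intro a ha
  obtain ⟨b, hb, hbP⟩ := Set.not_subset.1 ha
  exact (hP.2.2 a b (hFP (mem_coann_singleton.1 hb))).resolve_right hbP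

theorem minPrimeOver_of_subset_DF {F P : Set A} (hP : IsPrime P) (hFP : F ⊆ P)
    (hPD : P ⊆ DF F P) : MinPrimeOver F P := by
  refine ⟨hP, hFP, fun Q hQ hFQ hQP => hQP.antisymm fun x hx => ?_⟩
  obtain ⟨b, hb, hbP⟩ := Set.not_subset.1 (hPD hx)
  exact (hQ.2.2 x b (hFQ (mem_coann_singleton.1 hb))).resolve_right fun hbQ => hbP (hQP hbQ)

theorem MinPrimeOver.subset_DF {F P : Set A} (hF : IsFilter F) (hmin : MinPrimeOver F P) :
    P ⊆ DF F P := by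
  obtain ⟨hP, hFP, hminimal⟩ := hmin
  intro x hx hxF
  have hdisj : Disjoint F ((x ⊔ ·) '' Pᶜ) := by
    rw [Set.disjoint_image_right]
    exact Set.disjoint_left.2 fun y hxy hy => hy (hxF (mem_coann_singleton.2 hxy))
  obtain ⟨Q, hQ, hFQ, hQC⟩ := exists_isPrime_of_disjoint hF (hP.vClosed_sup_compl x) hdisj
  have hQP : Q ⊆ P := fun q hq => by
    by_contra hqP
    exact Set.disjoint_left.1 hQC (mem_coann_singleton.1 (hQ.1.subset_coann x hq)) ⟨q, hqP, rfl⟩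
  obtain ⟨y, hy⟩ := (Set.ne_univ_iff_exists_notMem P).1 hP.2.1
  rw [hminimal Q hQ hFQ hQP] at hQC
  exact Set.disjoint_left.1 hQC (hP.1.2.2 x hx y) ⟨y, hy, rfl⟩

end RL

theorem minimal_prime_characterization {A : Type u} [ResiduatedLattice A] (F P : Set A)
    (hF : RL.IsFilter F) (hP : RL.IsPrime P) (hFP : F ⊆ P) :
    (RL.MinPrimeOver F P ↔ P = RL.DF F P) ∧
    (RL.MinPrimeOver F P ↔ ∀ x : A, Xor' (x ∈ P) (RL.coann F {x} ⊆ P)) := by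
  have hmin : RL.MinPrimeOver F P ↔ P = RL.DF F P :=
    ⟨fun h => (h.subset_DF hF).antisymm (RL.DF_subset hP hFP),
      fun h => RL.minPrimeOver_of_subset_DF hP hFP h.le⟩
  refine ⟨hmin, hmin.trans ?_⟩
  rw [Set.ext_iff]
  exact forall_congr' fun x => xor_iff_iff_not.symm
end

section
/- Let A be a residuated lattice. The space Min(A) of minimal prime filters with the hull-kernel topology is compact if and only if A is a ⋆-residuated lattice, i.e., for every x ∈ A there exists y ∈ A with x^⊥⊥ = y^⊥. -/
/-!
Prime filters avoiding a `⊔`-closed set exist by Zorn's lemma: a maximal such filter `P` is prime,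
since `x ⊔ y ∈ P` gives `x ^ n ⊔ y ^ m ∈ P`, so every common element of the filters generated by
`P, x` and by `P, y` already lies in `P`. A minimal prime `m` containing `x` omits some `a ∈ x^⊥`;
hence the hull `h(x)` is both the closed complement of `d(x)` and the open set `⋃_{a ∈ x^⊥} d(a)`.
If `Min(A)` is compact, `h(x)` is covered by finitely many `d(aᵢ)`, and `y = a₁ ⊙ ⋯ ⊙ aₙ` satisfies
`x^⊥⊥ = y^⊥`. Conversely, `x^⊥⊥ = y^⊥` makes `d(y)` the complement of `d(x)`. By Alexander's
subbasis theorem it suffices to refine covers by basic opens `d(x)`, `x ∈ X`: if no finite part of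
`X` works, the joins of the partners `y` of finite parts of `X` avoid `⊤`, and a minimal prime below
a prime filter avoiding them lies in no `d(x)`.
-/

universe u

/-- The space of minimal prime filters. -/
def MinSpace (A : Type u) [ResiduatedLattice A] : Type u := {m : Set A // RL.MinPrime m}

instance (A : Type u) [ResiduatedLattice A] : TopologicalSpace (MinSpace A) :=
  TopologicalSpace.generateFrom {S : Set (MinSpace A) | ∃ x : A, S = {m : MinSpace A | x ∉ m.1}}

namespace RL

variable {A : Type u} [ResiduatedLattice A]

/-- `(A, ⊙, ⊤)` is a commutative monoid; making it a local instance lets `x * y`, `x ^ n` and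
`∏` stand for `⊙`-products. -/
abbrev commMonoid : CommMonoid A where
  mul := ResiduatedLattice.mul
  one := ⊤
  mul_assoc := ResiduatedLattice.mul_assoc
  one_mul x := (ResiduatedLattice.mul_comm ⊤ x).trans (ResiduatedLattice.mul_top x)
  mul_one := ResiduatedLattice.mul_top
  mul_comm := ResiduatedLattice.mul_comm

attribute [local instance] commMonoid

theorem one_eq_top : (1 : A) = ⊤ := rfl

theorem mul_le_iff_le_himp {x y z : A} : x * y ≤ z ↔ x ≤ ResiduatedLattice.himp y z :=
  ResiduatedLattice.adjoint x y z

instance isOrderedMonoid : IsOrderedMonoid A where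
  mul_le_mul_left _ _ h _ := mul_le_iff_le_himp.2 (h.trans (mul_le_iff_le_himp.1 le_rfl))

theorem le_one (x : A) : x ≤ 1 := le_top

theorem sup_mul_le (x y z : A) : (x ⊔ y) * z ≤ x * z ⊔ y * z :=
  mul_le_iff_le_himp.2 <| sup_le (mul_le_iff_le_himp.1 le_sup_left)
    (mul_le_iff_le_himp.1 le_sup_right)

theorem mul_sup_le (x y z : A) : x * (y ⊔ z) ≤ x * y ⊔ x * z := by
  simpa only [mul_comm x] using sup_mul_le y z x

theorem sup_mul_sup_le_s19 (x a b : A) : (x ⊔ a) * (x ⊔ b) ≤ x ⊔ a * b :=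
  calc (x ⊔ a) * (x ⊔ b) ≤ x * (x ⊔ b) ⊔ a * (x ⊔ b) := sup_mul_le x a _
    _ ≤ x ⊔ (a * x ⊔ a * b) :=
      sup_le_sup (mul_le_of_le_one_right' (le_one _)) (mul_sup_le a x b)
    _ ≤ x ⊔ a * b := by
      rw [← sup_assoc]
      exact sup_le_sup_right (sup_le le_rfl (mul_le_of_le_one_left' (le_one a))) _

namespace IsFilter

variable {F : Set A}

theorem mem_of_le_s19 (hF : IsFilter F) {a b : A} (ha : a ∈ F) (h : a ≤ b) : b ∈ F := by
  simpa only [sup_eq_right.2 h] using hF.2.2 a ha b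

theorem one_mem (hF : IsFilter F) : (1 : A) ∈ F :=
  hF.1.elim fun _ ha => hF.mem_of_le_s19 ha (le_one _)

theorem mul_mem (hF : IsFilter F) {a b : A} (ha : a ∈ F) (hb : b ∈ F) : a * b ∈ F :=
  hF.2.1 a ha b hb

theorem prod_mem (hF : IsFilter F) {ι : Type*} {s : Finset ι} {f : ι → A}
    (h : ∀ i ∈ s, f i ∈ F) : ∏ i ∈ s, f i ∈ F :=
  Finset.prod_induction f (· ∈ F) (fun _ _ => hF.mul_mem) hF.one_mem h

theorem sup_pow_mem (hF : IsFilter F) {a b : A} (hab : a ⊔ b ∈ F) (n : ℕ) : a ⊔ b ^ n ∈ F := by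
  induction n with
  | zero => exact hF.mem_of_le_s19 hF.one_mem le_sup_right
  | succ n ih =>
    rw [pow_succ']
    exact hF.mem_of_le_s19 (hF.mul_mem ih hab) <| by
      simpa only [mul_comm] using sup_mul_sup_le_s19 a (b ^ n) b

end IsFilter

theorem isFilter_perp (X : Set A) : IsFilter (perp X) := by
  refine ⟨⟨⊤, fun x _ => sup_top_eq x⟩, fun a ha b hb x hx => ?_, fun a ha b x hx => ?_⟩
  · have h := sup_mul_sup_le_s19 x a b
    rw [ha x hx, hb x hx, ← one_eq_top, mul_one] at h
    exact top_le_iff.1 h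
  · exact top_le_iff.1 <| (ha x hx).symm.le.trans (sup_le_sup_left le_sup_left x)

theorem mem_perp_singleton {x a : A} : a ∈ perp {x} ↔ x ⊔ a = ⊤ :=
  ⟨fun h => h x rfl, fun h _ hz => Set.mem_singleton_iff.1 hz ▸ h⟩

/-- The filter generated by a filter `F` and an element `x`. -/
def adjoin (F : Set A) (x : A) : Set A := {a | ∃ p ∈ F, ∃ n : ℕ, p * x ^ n ≤ a}

theorem subset_adjoin (F : Set A) (x : A) : F ⊆ adjoin F x :=
  fun a ha => ⟨a, ha, 0, by rw [pow_zero, mul_one]⟩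

theorem IsFilter.mem_adjoin_self {F : Set A} (hF : IsFilter F) (x : A) : x ∈ adjoin F x :=
  ⟨1, hF.one_mem, 1, by rw [one_mul, pow_one]⟩

theorem isFilter_adjoin {F : Set A} (hF : IsFilter F) (x : A) : IsFilter (adjoin F x) := by
  refine ⟨⟨x, hF.mem_adjoin_self x⟩, ?_, ?_⟩
  · rintro a ⟨p, hp, n, hpa⟩ b ⟨q, hq, m, hqb⟩
    refine ⟨p * q, hF.mul_mem hp hq, n + m, ?_⟩
    rw [pow_add, mul_mul_mul_comm]
    exact mul_le_mul' hpa hqb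
  · rintro a ⟨p, hp, n, hpa⟩ b
    exact ⟨p, hp, n, hpa.trans le_sup_left⟩

theorem IsFilter.sup_mem_of_mem_adjoin {F : Set A} (hF : IsFilter F) {x y a b : A}
    (hxy : x ⊔ y ∈ F) (ha : a ∈ adjoin F x) (hb : b ∈ adjoin F y) : a ⊔ b ∈ F := by
  obtain ⟨p, hp, n, hpa⟩ := ha
  obtain ⟨q, hq, m, hqb⟩ := hb
  have hxy' : x ^ n ⊔ y ^ m ∈ F := by
    have hyx : y ^ m ⊔ x ∈ F := sup_comm x (y ^ m) ▸ hF.sup_pow_mem hxy m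
    exact sup_comm (y ^ m) (x ^ n) ▸ hF.sup_pow_mem hyx n
  refine hF.mem_of_le_s19 (hF.mul_mem (hF.mul_mem hp hq) hxy') ?_
  calc p * q * (x ^ n ⊔ y ^ m) ≤ p * q * x ^ n ⊔ p * q * y ^ m := mul_sup_le _ _ _
    _ ≤ a ⊔ b := sup_le_sup
      ((mul_le_mul_left (mul_le_of_le_one_right' (le_one q)) _).trans hpa)
      ((mul_le_mul_left (mul_le_of_le_one_left' (le_one p)) _).trans hqb)

theorem isFilter_sUnion {c : Set (Set A)} (hc : IsChain (· ⊆ ·) c) (hne : c.Nonempty)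
    (h : ∀ G ∈ c, IsFilter G) : IsFilter (⋃₀ c) := by
  obtain ⟨G₀, hG₀⟩ := hne
  refine ⟨(h G₀ hG₀).1.mono (Set.subset_sUnion_of_mem hG₀), ?_, ?_⟩
  · rintro a ⟨G₁, hG₁, ha⟩ b ⟨G₂, hG₂, hb⟩
    rcases hc.total hG₁ hG₂ with h₁₂ | h₂₁
    · exact ⟨G₂, hG₂, (h G₂ hG₂).mul_mem (h₁₂ ha) hb⟩
    · exact ⟨G₁, hG₁, (h G₁ hG₁).mul_mem ha (h₂₁ hb)⟩
  · rintro a ⟨G, hG, ha⟩ b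
    exact ⟨G, hG, (h G hG).2.2 a ha b⟩

theorem isPrime_of_maximal {C P : Set A} (hC : VClosed C)
    (hP : Maximal (fun G => IsFilter G ∧ Disjoint G C) P) : IsPrime P := by
  have hPF : IsFilter P := hP.1.1
  have hPC : Disjoint P C := hP.1.2
  have hmeets : ∀ z ∉ P, ∃ c ∈ C, c ∈ adjoin P z := by
    intro z hz
    by_contra! h
    exact hz <| hP.2 ⟨isFilter_adjoin hPF z, Set.disjoint_left.2 fun c hc hcC => h c hcC hc⟩
      (subset_adjoin P z) (hPF.mem_adjoin_self z)
  refine ⟨hPF, fun hP => ?_, fun x y hxy => ?_⟩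
  · obtain ⟨c, hc⟩ := hC.1
    exact Set.disjoint_left.1 hPC (hP ▸ Set.mem_univ c) hc
  · by_contra! h
    obtain ⟨c₁, hc₁, hxc₁⟩ := hmeets x h.1
    obtain ⟨c₂, hc₂, hyc₂⟩ := hmeets y h.2
    exact Set.disjoint_left.1 hPC (hPF.sup_mem_of_mem_adjoin hxy hxc₁ hyc₂) (hC.2 c₁ hc₁ c₂ hc₂)

theorem IsFilter.exists_isPrime_disjoint {F C : Set A} (hF : IsFilter F) (hC : VClosed C)
    (hFC : Disjoint F C) : ∃ P, IsPrime P ∧ F ⊆ P ∧ Disjoint P C := by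
  obtain ⟨P, hFP, hP⟩ := zorn_subset_nonempty {G | IsFilter G ∧ Disjoint G C}
    (fun c hcS hc hne => ⟨⋃₀ c, ⟨isFilter_sUnion hc hne fun G hG => (hcS hG).1,
      Set.disjoint_sUnion_left.2 fun G hG => (hcS hG).2⟩, fun _ => Set.subset_sUnion_of_mem⟩)
    F ⟨hF, hFC⟩
  exact ⟨P, isPrime_of_maximal hC hP, hFP, hP.1.2⟩

theorem isFilter_singleton_top : IsFilter ({⊤} : Set A) :=
  ⟨Set.singleton_nonempty ⊤, by rintro _ rfl _ rfl; exact mul_one (1 : A),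
    by rintro _ rfl b; exact top_sup_eq b⟩

theorem vClosed_singleton (z : A) : VClosed ({z} : Set A) :=
  ⟨Set.singleton_nonempty z, by rintro _ rfl _ rfl; exact sup_idem _⟩

namespace IsPrime

variable {P : Set A}

theorem bot_notMem (hP : IsPrime P) : (⊥ : A) ∉ P :=
  fun h => hP.2.1 <| Set.eq_univ_of_forall fun _ => hP.1.mem_of_le_s19 h bot_le

theorem sup_notMem (hP : IsPrime P) {a b : A} (ha : a ∉ P) (hb : b ∉ P) : a ⊔ b ∉ P :=
  fun h => (hP.2.2 a b h).elim ha hb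

theorem mem_or_mem_of_sup_eq_top (hP : IsPrime P) {a b : A} (h : a ⊔ b = ⊤) : a ∈ P ∨ b ∈ P :=
  hP.2.2 a b (h ▸ hP.1.one_mem)

theorem finset_sup_notMem (hP : IsPrime P) {ι : Type*} {s : Finset ι} {f : ι → A}
    (h : ∀ i ∈ s, f i ∉ P) : s.sup f ∉ P :=
  Finset.sup_induction (p := (· ∉ P)) hP.bot_notMem (fun _ ha _ hb => hP.sup_notMem ha hb) h

end IsPrime

theorem isFilter_sInter {c : Set (Set A)} (h : ∀ G ∈ c, IsFilter G) : IsFilter (⋂₀ c) :=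
  ⟨⟨1, fun G hG => (h G hG).one_mem⟩, fun _ ha _ hb G hG => (h G hG).mul_mem (ha G hG) (hb G hG),
    fun a ha b G hG => (h G hG).2.2 a (ha G hG) b⟩

theorem isPrime_sInter {c : Set (Set A)} (hc : IsChain (· ⊆ ·) c) (hne : c.Nonempty)
    (h : ∀ Q ∈ c, IsPrime Q) : IsPrime (⋂₀ c) := by
  obtain ⟨Q₀, hQ₀⟩ := hne
  refine ⟨isFilter_sInter fun Q hQ => (h Q hQ).1, fun huniv => ?_, ?_⟩
  · exact (h Q₀ hQ₀).2.1 (Set.eq_univ_of_univ_subset (huniv ▸ Set.sInter_subset_of_mem hQ₀))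
  · intro a b hab
    by_contra! hne
    simp only [Set.mem_sInter, not_forall] at hne
    obtain ⟨⟨Q₁, hQ₁, haQ₁⟩, ⟨Q₂, hQ₂, hbQ₂⟩⟩ := hne
    rcases hc.total hQ₁ hQ₂ with h₁₂ | h₂₁
    · exact (h Q₁ hQ₁).sup_notMem haQ₁ (fun hb => hbQ₂ (h₁₂ hb)) (hab Q₁ hQ₁)
    · exact (h Q₂ hQ₂).sup_notMem (fun ha => haQ₁ (h₂₁ ha)) hbQ₂ (hab Q₂ hQ₂)

theorem IsPrime.exists_minPrime_subset {P : Set A} (hP : IsPrime P) :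
    ∃ m, MinPrime m ∧ m ⊆ P := by
  obtain ⟨m, hmP, hm⟩ := zorn_superset_nonempty {Q | IsPrime Q}
    (fun c hcS hc hne => ⟨⋂₀ c, isPrime_sInter hc hne hcS, fun _ => Set.sInter_subset_of_mem⟩)
    P hP
  exact ⟨m, ⟨hm.1, fun _ hQ hQm => hQm.antisymm (hm.2 hQ hQm)⟩, hmP⟩

theorem exists_minPrime_notMem {z : A} (hz : z ≠ ⊤) : ∃ m, MinPrime m ∧ z ∉ m := by
  obtain ⟨P, hP, -, hPz⟩ := isFilter_singleton_top.exists_isPrime_disjoint (vClosed_singleton z)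
    (Set.disjoint_singleton.2 hz.symm)
  obtain ⟨m, hm, hmP⟩ := hP.exists_minPrime_subset
  exact ⟨m, hm, fun h => Set.disjoint_singleton_right.1 hPz (hmP h)⟩

namespace MinPrime

variable {m : Set A}

/-- If `x^⊥ ⊆ m`, the `⊔`-closed set of all `d` and `x ⊔ d` with `d ∉ m` avoids `⊤`; a prime
filter avoiding it lies inside `m` and omits `x`, contradicting minimality. -/
theorem exists_mem_perp_notMem (hm : MinPrime m) {x : A} (hx : x ∈ m) :
    ∃ a ∈ perp {x}, a ∉ m := by
  by_contra! hperp
  set C : Set A := {c | ∃ d ∉ m, c = d ∨ c = x ⊔ d}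
  have hxC : x ∈ C := ⟨⊥, hm.1.bot_notMem, Or.inr (sup_bot_eq x).symm⟩
  have hC : VClosed C := by
    refine ⟨⟨x, hxC⟩, ?_⟩
    rintro c₁ ⟨d₁, hd₁, h₁ | h₁⟩ c₂ ⟨d₂, hd₂, h₂ | h₂⟩ <;> subst c₁ c₂ <;>
      refine ⟨d₁ ⊔ d₂, hm.1.sup_notMem hd₁ hd₂, ?_⟩
    · exact Or.inl rfl
    · exact Or.inr (sup_left_comm d₁ x d₂)
    · exact Or.inr (sup_assoc x d₁ d₂)
    · exact Or.inr (sup_sup_distrib_left x d₁ d₂).symm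
  have hC_top : Disjoint {⊤} C := by
    refine Set.disjoint_singleton_left.2 fun ⟨d, hdm, htop⟩ => ?_
    rcases htop with htop | htop
    · exact hdm (htop ▸ hm.1.1.one_mem)
    · exact hdm (hperp d (mem_perp_singleton.2 htop.symm))
  obtain ⟨Q, hQ, -, hQC⟩ := isFilter_singleton_top.exists_isPrime_disjoint hC hC_top
  have hQm : Q ⊆ m := fun a ha => by_contra fun ham =>
    Set.disjoint_left.1 hQC ha ⟨a, ham, Or.inl rfl⟩
  exact Set.disjoint_left.1 hQC (hm.2 Q hQ hQm ▸ hx) hxC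

theorem mem_iff_notMem (hm : MinPrime m) {x y : A} (h : perp (perp {x}) = perp {y}) :
    x ∈ m ↔ y ∉ m := by
  have hperp : ∀ a ∈ perp {x}, ∀ b ∈ perp {y}, a ⊔ b = ⊤ :=
    fun a ha b hb => (h ▸ hb : b ∈ perp (perp {x})) a ha
  refine ⟨fun hx hy => ?_, fun hy => ?_⟩
  · obtain ⟨a, ha, ham⟩ := hm.exists_mem_perp_notMem hx
    obtain ⟨b, hb, hbm⟩ := hm.exists_mem_perp_notMem hy
    exact (hm.1.mem_or_mem_of_sup_eq_top (hperp a ha b hb)).elim ham hbm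
  · have hx : x ∈ perp {y} := h ▸ fun a ha => sup_comm x a ▸ ha x rfl
    exact (hm.1.mem_or_mem_of_sup_eq_top (hx y rfl)).resolve_left hy

end MinPrime

theorem perp_perp_eq_perp_of_forall {x y : A} (hy : y ∈ perp {x})
    (h : ∀ m, MinPrime m → x ∈ m → y ∉ m) : perp (perp {x}) = perp {y} := by
  refine Set.Subset.antisymm (fun b hb => ?_) (fun b hb a ha => ?_)
  · exact mem_perp_singleton.2 (hb y hy)
  · by_contra hab
    obtain ⟨m, hm, habm⟩ := exists_minPrime_notMem hab
    have ham : a ∉ m := fun h => habm (hm.1.1.mem_of_le_s19 h le_sup_left)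
    have hbm : b ∉ m := fun h => habm (hm.1.1.mem_of_le_s19 h le_sup_right)
    have hxm : x ∈ m := (hm.1.mem_or_mem_of_sup_eq_top (ha x rfl)).resolve_right ham
    exact (hm.1.mem_or_mem_of_sup_eq_top (hb y rfl)).elim (h m hm hxm) hbm

theorem prod_le_of_mem {ι : Type*} {s : Finset ι} {f : ι → A} {i : ι} (hi : i ∈ s) :
    ∏ j ∈ s, f j ≤ f i :=
  (Finset.prod_le_prod_of_subset_of_le_one' (Finset.singleton_subset_iff.2 hi)
    fun j _ _ => le_one (f j)).trans_eq (Finset.prod_singleton f i)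

/-- `A` is a ⋆-residuated lattice. -/
def IsStar (A : Type u) [ResiduatedLattice A] : Prop :=
  ∀ x : A, ∃ y : A, perp (perp {x}) = perp {y}

def basicOpen (x : A) : Set (MinSpace A) := {m | x ∉ m.1}

theorem isOpen_basicOpen (x : A) : IsOpen (basicOpen x) :=
  TopologicalSpace.GenerateOpen.basic _ ⟨x, rfl⟩

theorem IsStar.of_compactSpace [CompactSpace (MinSpace A)] : IsStar A := by
  intro x
  have hclosed : IsClosed {m : MinSpace A | x ∈ m.1} := by
    simpa only [basicOpen, Set.compl_ofPred, not_not] using (isOpen_basicOpen x).isClosed_compl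
  have hcover : {m : MinSpace A | x ∈ m.1} ⊆ ⋃ a : perp {x}, basicOpen a.1 := fun m hm =>
    let ⟨a, ha, ham⟩ := m.2.exists_mem_perp_notMem hm
    Set.mem_iUnion.2 ⟨⟨a, ha⟩, ham⟩
  obtain ⟨t, ht⟩ := hclosed.isCompact.elim_finite_subcover _
    (fun a : perp {x} => isOpen_basicOpen a.1) hcover
  refine ⟨∏ a ∈ t, a.1, perp_perp_eq_perp_of_forall
    ((isFilter_perp _).prod_mem fun a _ => a.2) fun m hm hxm hym => ?_⟩
  obtain ⟨a, hat, ham⟩ := Set.mem_iUnion₂.1 (ht (show (⟨m, hm⟩ : MinSpace A) ∈ _ from hxm))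
  exact ham (hm.1.1.mem_of_le_s19 hym (prod_le_of_mem hat))

theorem IsStar.exists_finset_forall_exists_notMem (hA : IsStar A) {X : Set A}
    (hX : ∀ m : MinSpace A, ∃ x ∈ X, x ∉ m.1) :
    ∃ t : Finset A, ↑t ⊆ X ∧ ∀ m : MinSpace A, ∃ x ∈ t, x ∉ m.1 := by
  classical
  choose f hf using hA
  by_contra! hcon
  set C : Set A := {c | ∃ t : Finset A, ↑t ⊆ X ∧ c = t.sup f}
  have hC : VClosed C := by
    refine ⟨⟨⊥, ∅, Finset.coe_empty ▸ Set.empty_subset X, Finset.sup_empty.symm⟩, ?_⟩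
    rintro _ ⟨s, hs, rfl⟩ _ ⟨t, ht, rfl⟩
    exact ⟨s ∪ t, Finset.coe_union s t ▸ Set.union_subset hs ht, Finset.sup_union.symm⟩
  have hC_top : Disjoint {⊤} C := by
    refine Set.disjoint_singleton_left.2 fun ⟨t, htX, htop⟩ => ?_
    obtain ⟨m, hm⟩ := hcon t htX
    exact m.2.1.finset_sup_notMem (fun x hx => (m.2.mem_iff_notMem (hf x)).1 (hm x hx))
      (htop ▸ m.2.1.1.one_mem)
  obtain ⟨Q, hQ, -, hQC⟩ := isFilter_singleton_top.exists_isPrime_disjoint hC hC_top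
  obtain ⟨m, hm, hmQ⟩ := hQ.exists_minPrime_subset
  obtain ⟨x, hxX, hxm⟩ := hX ⟨m, hm⟩
  have hfx : f x ∈ m := not_not.1 fun h => hxm ((hm.mem_iff_notMem (hf x)).2 h)
  exact Set.disjoint_left.1 hQC (hmQ hfx)
    ⟨{x}, Finset.coe_singleton x ▸ Set.singleton_subset_iff.2 hxX, Finset.sup_singleton.symm⟩

theorem IsStar.compactSpace (hA : IsStar A) : CompactSpace (MinSpace A) := by
  refine compactSpace_generateFrom rfl fun P hP hcover => ?_
  obtain ⟨t, htX, ht⟩ := hA.exists_finset_forall_exists_notMem (X := {x | basicOpen x ∈ P})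
    fun m => by
      obtain ⟨U, hUP, hmU⟩ := Set.mem_sUnion.1 (hcover.symm ▸ Set.mem_univ m)
      obtain ⟨x, rfl⟩ := hP hUP
      exact ⟨x, hUP, hmU⟩
  refine ⟨basicOpen '' t, Set.image_subset_iff.2 htX, t.finite_toSet.image _,
    Set.eq_univ_of_forall fun m => ?_⟩
  obtain ⟨x, hxt, hxm⟩ := ht m
  exact ⟨basicOpen x, ⟨x, hxt, rfl⟩, hxm⟩

end RL

theorem min_space_compact_iff_star {A : Type u} [ResiduatedLattice A] :
    CompactSpace (MinSpace A) ↔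
      ∀ x : A, ∃ y : A, RL.perp (RL.perp {x}) = RL.perp {y} :=
  ⟨fun _ => RL.IsStar.of_compactSpace, RL.IsStar.compactSpace⟩
end
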